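/- (Theorem 1, trajectory part.) Assume H is invertible and let x_0 ∈ ℝⁿ. Let u* be the profile with u*_i(t) = −(1/(r_i·d_i))·B̂_iᵀ·exp((T−t)Λᵀ)·L̂_i·H⁻¹·exp(TΛ)·x_0 for t ∈ [0,T] and u*_i(t) = 0 for t ∉ [0,T], and let x* = x_{u*} be its trajectory from x_0. Then x*(τ) = exp(τΛ)·x_0, and for every t ∈ [0,T], x*(t+τ) = exp(tΛ)·x*(τ) − exp(τΛ)·∑_{j=1}^n ( ∫₀ᵗ exp((t−s)Λ)·S_j·exp((T−s)Λᵀ) ds )·(1/d_j)·L̂_j·H⁻¹·exp(TΛ)·x_0; in particular x*(t_f) = exp(τΛ)·H⁻¹·exp(TΛ)·x_0. -/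

import Mathlib

open Matrix MeasureTheory
open scoped Matrix

noncomputable section

/-- The matrix exponential of a real `n × n` matrix. -/
def mexp {n : ℕ} (A : Matrix (Fin n) (Fin n) ℝ) : Matrix (Fin n) (Fin n) ℝ :=
  NormedSpace.exp A

/-- An admissible control of the delayed game: a bounded measurable function `u : ℝ → ℝ`
with `u s = 0` for `s < 0`. -/
def AdmissibleD (u : ℝ → ℝ) : Prop :=
  Measurable u ∧ (∃ C, ∀ s, |u s| ≤ C) ∧ ∀ s < 0, u s = 0

/-- An admissible control of the delay-free game: a bounded measurable function. -/
def AdmissibleF (u : ℝ → ℝ) : Prop :=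
  Measurable u ∧ ∃ C, ∀ s, |u s| ≤ C

/-- Data of the differential games of opinion formation: the system matrix `Λ`
(the continuous-time Hegselmann–Krause matrix `Λ = D⁻¹A − I`), the input delay `τ`,
the terminal time `tf`, and for each player `i` the input vector `B i`, the control
weight `r i`, the neighborhood size `d i = |𝒩ᵢ|`, the agent-`i` graph Laplacian `L i`
and the stubbornness coefficient `ω i`. -/
structure GameData (n : ℕ) where
  Λ : Matrix (Fin n) (Fin n) ℝ
  τ : ℝ
  tf : ℝ
  B : Fin n → Fin n → ℝ
  r : Fin n → ℝ
  d : Fin n → ℝ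
  L : Fin n → Matrix (Fin n) (Fin n) ℝ
  ω : Fin n → ℝ

namespace GameData

variable {n : ℕ} (G : GameData n)

/-- The standing hypotheses: `τ ≥ 0`, `t_f > τ`, `rᵢ > 0`, `dᵢ > 0`, each `Lᵢ` symmetric
positive semidefinite, and `ωᵢ ∈ [0,1]`. -/
def Valid : Prop :=
  0 ≤ G.τ ∧ G.τ < G.tf ∧ (∀ i, 0 < G.r i) ∧ (∀ i, 0 < G.d i) ∧
    (∀ i, (G.L i).PosSemidef) ∧ ∀ i, G.ω i ∈ Set.Icc (0 : ℝ) 1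

/-- `T = t_f − τ`. -/
def T : ℝ := G.tf - G.τ

/-- `B̂ᵢ = exp(−τΛ)·Bᵢ`. -/
def Bhat (i : Fin n) : Fin n → ℝ := (mexp ((-G.τ) • G.Λ)).mulVec (G.B i)

/-- `L̂ᵢ = exp(τΛᵀ)·Lᵢ·exp(τΛ)`. -/
def Lhat (i : Fin n) : Matrix (Fin n) (Fin n) ℝ :=
  mexp (G.τ • G.Λᵀ) * G.L i * mexp (G.τ • G.Λ)

/-- `Sᵢ = (1/rᵢ)·B̂ᵢ·B̂ᵢᵀ`. -/
def S (i : Fin n) : Matrix (Fin n) (Fin n) ℝ :=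
  (1 / G.r i) • vecMulVec (G.Bhat i) (G.Bhat i)

/-- The matrix `∫₀ᵗ exp((t−s)Λ)·Sᵢ·exp((T−s)Λᵀ) ds` (entrywise integral). -/
def Phi (T' : ℝ) (i : Fin n) (t : ℝ) : Matrix (Fin n) (Fin n) ℝ :=
  Matrix.of fun a b =>
    ∫ s in (0:ℝ)..t, (mexp ((t - s) • G.Λ) * G.S i * mexp ((T' - s) • G.Λᵀ)) a b

/-- `Ψᵢ = ∫₀ᵀ exp((T−s)Λ)·Sᵢ·exp((T−s)Λᵀ) ds` with `T = t_f − τ`. -/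
def Psi (i : Fin n) : Matrix (Fin n) (Fin n) ℝ := G.Phi G.T i G.T

/-- `H = I + ∑ⱼ (1/dⱼ)·Ψⱼ·L̂ⱼ`. -/
def H : Matrix (Fin n) (Fin n) ℝ :=
  1 + ∑ j : Fin n, (1 / G.d j) • (G.Psi j * G.Lhat j)

/-- `Wᵢ`: the matrix whose `(i,i)` entry is `ωᵢ` and all other entries are `0`. -/
def W (i : Fin n) : Matrix (Fin n) (Fin n) ℝ := Matrix.single i i (G.ω i)

/-- `Ŵᵢ = exp(τΛᵀ)·Wᵢ·exp(τΛ)`. -/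
def What (i : Fin n) : Matrix (Fin n) (Fin n) ℝ :=
  mexp (G.τ • G.Λᵀ) * G.W i * mexp (G.τ • G.Λ)

/-- `Ĥ = I + ∑ⱼ Ψⱼ·(Ŵⱼ + ((1−ωⱼ)/dⱼ)·L̂ⱼ)`. -/
def Hhat : Matrix (Fin n) (Fin n) ℝ :=
  1 + ∑ j : Fin n, G.Psi j * (G.What j + ((1 - G.ω j) / G.d j) • G.Lhat j)

/-- The trajectory of the delayed game:
`x_u(t) = exp(tΛ)·x₀ + ∫₀ᵗ exp((t−s)Λ)·(∑ⱼ Bⱼ·uⱼ(s−τ)) ds`. -/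
def xtraj (x0 : Fin n → ℝ) (u : Fin n → ℝ → ℝ) (t : ℝ) : Fin n → ℝ :=
  (mexp (t • G.Λ)).mulVec x0 +
    ∫ s in (0:ℝ)..t, (mexp ((t - s) • G.Λ)).mulVec (∑ j : Fin n, u j (s - G.τ) • G.B j)

/-- The trajectory of the delay-free game:
`y_u(t) = exp(tΛ)·y₀ + ∫₀ᵗ exp((t−s)Λ)·(∑ⱼ B̂ⱼ·uⱼ(s)) ds`. -/
def ytraj (y0 : Fin n → ℝ) (u : Fin n → ℝ → ℝ) (t : ℝ) : Fin n → ℝ :=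
  (mexp (t • G.Λ)).mulVec y0 +
    ∫ s in (0:ℝ)..t, (mexp ((t - s) • G.Λ)).mulVec (∑ j : Fin n, u j s • G.Bhat j)

/-- Player `i`'s cost in the delayed game:
`Jᵢ(u) = (1/dᵢ)·x_u(t_f)ᵀ·Lᵢ·x_u(t_f) + ∫₀^{t_f} rᵢ·uᵢ(t−τ)² dt`. -/
def J (x0 : Fin n → ℝ) (i : Fin n) (u : Fin n → ℝ → ℝ) : ℝ :=
  (1 / G.d i) * (G.xtraj x0 u G.tf ⬝ᵥ (G.L i).mulVec (G.xtraj x0 u G.tf)) +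
    ∫ t in (0:ℝ)..G.tf, G.r i * u i (t - G.τ) ^ 2

/-- Player `i`'s cost in the delay-free game:
`Ĵᵢ(u) = (1/dᵢ)·y_u(T)ᵀ·L̂ᵢ·y_u(T) + ∫₀ᵀ rᵢ·uᵢ(t)² dt`. -/
def JF (y0 : Fin n → ℝ) (i : Fin n) (u : Fin n → ℝ → ℝ) : ℝ :=
  (1 / G.d i) * (G.ytraj y0 u G.T ⬝ᵥ (G.Lhat i).mulVec (G.ytraj y0 u G.T)) +
    ∫ t in (0:ℝ)..G.T, G.r i * u i t ^ 2

/-- Player `i`'s stubborn cost in the delayed game. -/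
def Jstub (x0 : Fin n → ℝ) (i : Fin n) (u : Fin n → ℝ → ℝ) : ℝ :=
  (G.xtraj x0 u G.tf - x0) ⬝ᵥ (G.W i).mulVec (G.xtraj x0 u G.tf - x0) +
    ((1 - G.ω i) / G.d i) * (G.xtraj x0 u G.tf ⬝ᵥ (G.L i).mulVec (G.xtraj x0 u G.tf)) +
    ∫ t in (0:ℝ)..G.tf, G.r i * u i (t - G.τ) ^ 2

/-- Player `i`'s stubborn cost in the delay-free game, with reference opinion `x₀`. -/
def JstubF (x0 y0 : Fin n → ℝ) (i : Fin n) (u : Fin n → ℝ → ℝ) : ℝ :=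
  ((mexp (G.τ • G.Λ)).mulVec (G.ytraj y0 u G.T) - x0) ⬝ᵥ
      (G.W i).mulVec ((mexp (G.τ • G.Λ)).mulVec (G.ytraj y0 u G.T) - x0) +
    ((1 - G.ω i) / G.d i) * (G.ytraj y0 u G.T ⬝ᵥ (G.Lhat i).mulVec (G.ytraj y0 u G.T)) +
    ∫ t in (0:ℝ)..G.T, G.r i * u i t ^ 2

/-- Open-loop Nash equilibrium of the delayed game. -/
def NashD (x0 : Fin n → ℝ) (u : Fin n → ℝ → ℝ) : Prop :=
  (∀ i, AdmissibleD (u i)) ∧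
    ∀ i, ∀ v : ℝ → ℝ, AdmissibleD v →
      G.J x0 i u ≤ G.J x0 i (Function.update u i v)

/-- Open-loop Nash equilibrium of the delay-free game. -/
def NashF (y0 : Fin n → ℝ) (u : Fin n → ℝ → ℝ) : Prop :=
  (∀ i, AdmissibleF (u i)) ∧
    ∀ i, ∀ v : ℝ → ℝ, AdmissibleF v →
      G.JF y0 i u ≤ G.JF y0 i (Function.update u i v)

/-- Open-loop Nash equilibrium of the stubborn delayed game. -/
def NashStubD (x0 : Fin n → ℝ) (u : Fin n → ℝ → ℝ) : Prop :=
  (∀ i, AdmissibleD (u i)) ∧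
    ∀ i, ∀ v : ℝ → ℝ, AdmissibleD v →
      G.Jstub x0 i u ≤ G.Jstub x0 i (Function.update u i v)

/-- Open-loop Nash equilibrium of the stubborn delay-free game. -/
def NashStubF (x0 y0 : Fin n → ℝ) (u : Fin n → ℝ → ℝ) : Prop :=
  (∀ i, AdmissibleF (u i)) ∧
    ∀ i, ∀ v : ℝ → ℝ, AdmissibleF v →
      G.JstubF x0 y0 i u ≤ G.JstubF x0 y0 i (Function.update u i v)

end GameData

/-! The controls vanish before time `0`, so the delayed input is inactive on `[0, τ]` and
`x*(τ) = exp(τΛ)·x₀`; after the shift `s ↦ s − τ` the remaining Duhamel integral is driven by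
`u*` itself. Since `Bⱼ = exp(τΛ)·B̂ⱼ`, each term `Bⱼ·u*ⱼ(s)` is `−exp(τΛ)` times the rank-one
matrix `Sⱼ` applied to `exp((T−s)Λᵀ)·(1/dⱼ)·L̂ⱼ·w` with `w = H⁻¹·exp(TΛ)·x₀`, and integrating
gives the `Φⱼ` formula. At `t = T` the sum is `(H − I)·w`, and `exp(TΛ)·x₀ = H·w` leaves
`x*(t_f) = exp(τΛ)·w`. -/

open scoped Matrix.Norms.Operator in
theorem continuous_mexp_smul {n : ℕ} (Λ : Matrix (Fin n) (Fin n) ℝ) {f : ℝ → ℝ}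
    (hf : Continuous f) : Continuous fun s => mexp (f s • Λ) :=
  NormedSpace.exp_continuous.comp (hf.smul continuous_const)

theorem mexp_add_smul {n : ℕ} (Λ : Matrix (Fin n) (Fin n) ℝ) (a b : ℝ) :
    mexp ((a + b) • Λ) = mexp (a • Λ) * mexp (b • Λ) := by
  rw [add_smul]
  exact Matrix.exp_add_of_commute _ _ (((Commute.refl Λ).smul_left a).smul_right b)

section IntervalIntegral

variable {m k : Type*} [Fintype m] [Fintype k] {a b : ℝ}

theorem intervalIntegral_pi_apply {f : ℝ → k → ℝ} (hf : IntervalIntegrable f volume a b)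
    (i : k) : (∫ s in a..b, f s) i = ∫ s in a..b, f s i :=
  ((ContinuousLinearMap.proj (R := ℝ) (φ := fun _ : k => ℝ) i).intervalIntegral_comp_comm
    hf).symm

theorem intervalIntegral_mulVec_const {M : ℝ → Matrix m k ℝ} (hM : Continuous M) (v : k → ℝ) :
    ∫ s in a..b, M s *ᵥ v = (Matrix.of fun i j => ∫ s in a..b, M s i j) *ᵥ v := by
  funext i
  rw [intervalIntegral_pi_apply ((hM.matrix_mulVec continuous_const).intervalIntegrable a b)]
  simp only [Matrix.mulVec, dotProduct, Matrix.of_apply]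
  rw [intervalIntegral.integral_finsetSum]
  · exact Finset.sum_congr rfl fun j _ => intervalIntegral.integral_mul_const _ _
  · exact fun j _ => ((hM.matrix_elem i j).mul continuous_const).intervalIntegrable a b

theorem intervalIntegral_mulVec_comm (C : Matrix m k ℝ) {f : ℝ → k → ℝ}
    (hf : IntervalIntegrable f volume a b) :
    ∫ s in a..b, C *ᵥ f s = C *ᵥ ∫ s in a..b, f s :=
  (LinearMap.toContinuousLinearMap C.mulVecLin).intervalIntegral_comp_comm hf

theorem intervalIntegral_eq_of_eq_zero_of_lt {E : Type*} [NormedAddCommGroup E]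
    [NormedSpace ℝ E] {f : ℝ → E} {c : ℝ} (hab : a ≤ b) (hbc : b ≤ c)
    (hf : ∀ x < b, f x = 0) : ∫ x in a..c, f x = ∫ x in b..c, f x := by
  rw [intervalIntegral.integral_of_le (hab.trans hbc), intervalIntegral.integral_of_le hbc]
  refine setIntegral_eq_of_subset_of_ae_sdiff_eq_zero measurableSet_Ioc.nullMeasurableSet
    (Set.Ioc_subset_Ioc_left hab) ?_
  filter_upwards [Measure.ae_ne volume b] with x hxb hx
  exact hf x (lt_of_le_of_ne (not_lt.1 fun h => hx.2 ⟨h, hx.1.2⟩) hxb)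

end IntervalIntegral

namespace GameData

variable {n : ℕ} (G : GameData n)

theorem B_eq_mexp_mulVec_Bhat (i : Fin n) : G.B i = mexp (G.τ • G.Λ) *ᵥ G.Bhat i := by
  rw [Bhat, mulVec_mulVec, ← mexp_add_smul, add_neg_cancel, zero_smul, mexp,
    NormedSpace.exp_zero, one_mulVec]

theorem S_mulVec (i : Fin n) (v : Fin n → ℝ) :
    G.S i *ᵥ v = ((1 / G.r i) * (G.Bhat i ⬝ᵥ v)) • G.Bhat i := by
  rw [S, smul_mulVec, vecMulVec_mulVec, op_smul_eq_smul, smul_smul]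

theorem mexp_mulVec_mexp_mul_S_mulVec (i : Fin n) (a : ℝ) (v : Fin n → ℝ) :
    mexp (G.τ • G.Λ) *ᵥ ((mexp (a • G.Λ) * G.S i) *ᵥ v) =
      ((1 / G.r i) * (G.Bhat i ⬝ᵥ v)) • (mexp (a • G.Λ) *ᵥ G.B i) := by
  rw [← mulVec_mulVec, S_mulVec, mulVec_smul, mulVec_smul, mulVec_mulVec, ← mexp_add_smul,
    add_comm, mexp_add_smul, ← mulVec_mulVec, ← B_eq_mexp_mulVec_Bhat]

theorem continuous_Phi_integrand (T' : ℝ) (i : Fin n) (t : ℝ) :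
    Continuous fun s => mexp ((t - s) • G.Λ) * G.S i * mexp ((T' - s) • G.Λᵀ) :=
  ((continuous_mexp_smul G.Λ (continuous_const.sub continuous_id)).matrix_mul
    continuous_const).matrix_mul (continuous_mexp_smul G.Λᵀ (continuous_const.sub continuous_id))

theorem intervalIntegral_sum_eq_sum_Phi_mulVec (T' t : ℝ) (v : Fin n → Fin n → ℝ) :
    ∫ s in (0:ℝ)..t, ∑ j, (mexp ((t - s) • G.Λ) * G.S j * mexp ((T' - s) • G.Λᵀ)) *ᵥ v j =
      ∑ j, G.Phi T' j t *ᵥ v j := by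
  rw [intervalIntegral.integral_finsetSum fun j _ =>
    ((G.continuous_Phi_integrand T' j t).matrix_mulVec continuous_const).intervalIntegrable 0 t]
  exact Finset.sum_congr rfl fun j _ =>
    intervalIntegral_mulVec_const (G.continuous_Phi_integrand T' j t) (v j)

theorem H_mulVec (v : Fin n → ℝ) :
    G.H *ᵥ v = v + ∑ j, G.Psi j *ᵥ ((1 / G.d j) • G.Lhat j *ᵥ v) := by
  simp only [H, add_mulVec, one_mulVec, Matrix.sum_mulVec, smul_mulVec, mulVec_smul,
    mulVec_mulVec]

variable {G} {x0 : Fin n → ℝ} {u : Fin n → ℝ → ℝ}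

theorem xtraj_add_τ (hτ : 0 ≤ G.τ) (hu : ∀ j, ∀ s < 0, u j s = 0) {t : ℝ} (ht : 0 ≤ t) :
    G.xtraj x0 u (t + G.τ) = mexp ((t + G.τ) • G.Λ) *ᵥ x0 +
      ∫ s in (0:ℝ)..t, mexp ((t - s) • G.Λ) *ᵥ ∑ j, u j s • G.B j := by
  have hshift := intervalIntegral.integral_comp_sub_right (a := 0) (b := t + G.τ)
    (fun s => mexp ((t - s) • G.Λ) *ᵥ ∑ j, u j s • G.B j) G.τ
  simp only [sub_sub_eq_add_sub, zero_sub, add_sub_cancel_right] at hshift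
  rw [xtraj, hshift, intervalIntegral_eq_of_eq_zero_of_lt (neg_nonpos.2 hτ) ht]
  intro s hs
  simp [hu _ s hs]

theorem xtraj_τ (hτ : 0 ≤ G.τ) (hu : ∀ j, ∀ s < 0, u j s = 0) :
    G.xtraj x0 u G.τ = mexp (G.τ • G.Λ) *ᵥ x0 := by
  simpa using xtraj_add_τ (x0 := x0) hτ hu le_rfl

theorem mexp_mulVec_sum_smul_B_of_eq {w : Fin n → ℝ} {s : ℝ}
    (hus : ∀ j, u j s = -(1 / (G.r j * G.d j)) *
      (G.Bhat j ⬝ᵥ mexp ((G.T - s) • G.Λᵀ) *ᵥ (G.Lhat j *ᵥ w))) (t : ℝ) :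
    mexp ((t - s) • G.Λ) *ᵥ ∑ j, u j s • G.B j =
      -(mexp (G.τ • G.Λ) *ᵥ ∑ j, (mexp ((t - s) • G.Λ) * G.S j * mexp ((G.T - s) • G.Λᵀ)) *ᵥ
        ((1 / G.d j) • G.Lhat j *ᵥ w)) := by
  rw [mulVec_sum, mulVec_sum, ← Finset.sum_neg_distrib]
  refine Finset.sum_congr rfl fun j _ => ?_
  rw [← mulVec_mulVec, mexp_mulVec_mexp_mul_S_mulVec, hus, mulVec_smul, mulVec_smul,
    dotProduct_smul, smul_eq_mul, ← neg_smul]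
  congr 1
  ring

theorem xtraj_add_τ_eq_sub_Phi (hτ : 0 ≤ G.τ) (hu : ∀ j, ∀ s < 0, u j s = 0) {w : Fin n → ℝ}
    (hu1 : ∀ j, ∀ s ∈ Set.Icc (0:ℝ) G.T, u j s = -(1 / (G.r j * G.d j)) *
      (G.Bhat j ⬝ᵥ mexp ((G.T - s) • G.Λᵀ) *ᵥ (G.Lhat j *ᵥ w))) :
    ∀ t ∈ Set.Icc (0:ℝ) G.T, G.xtraj x0 u (t + G.τ) = mexp (t • G.Λ) *ᵥ G.xtraj x0 u G.τ -
      mexp (G.τ • G.Λ) *ᵥ ∑ j, G.Phi G.T j t *ᵥ ((1 / G.d j) • G.Lhat j *ᵥ w) := by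
  intro t ht
  rw [xtraj_add_τ hτ hu ht.1, xtraj_τ hτ hu, mulVec_mulVec, ← mexp_add_smul, sub_eq_add_neg,
    ← G.intervalIntegral_sum_eq_sum_Phi_mulVec, ← intervalIntegral_mulVec_comm,
    ← intervalIntegral.integral_neg]
  · refine congrArg _ (intervalIntegral.integral_congr fun s hs => ?_)
    rw [Set.uIcc_of_le ht.1] at hs
    exact mexp_mulVec_sum_smul_B_of_eq
      (fun j => hu1 j s ⟨hs.1, hs.2.trans ht.2⟩) t
  · exact (continuous_finsetSum _ fun j _ => (G.continuous_Phi_integrand _ j t).matrix_mulVec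
      continuous_const).intervalIntegrable 0 t

end GameData

/-- Theorem 1, trajectory part: the trajectory `x*` of the Nash equilibrium profile from
`x₀` satisfies `x*(τ) = exp(τΛ)·x₀`, the explicit formula
`x*(t+τ) = exp(tΛ)·x*(τ) − exp(τΛ)·∑ⱼ (∫₀ᵗ exp((t−s)Λ)·Sⱼ·exp((T−s)Λᵀ) ds)·(1/dⱼ)·L̂ⱼ·H⁻¹·exp(TΛ)·x₀`
for `t ∈ [0,T]`, and in particular `x*(t_f) = exp(τΛ)·H⁻¹·exp(TΛ)·x₀`. -/
theorem statement_12 {n : ℕ} (G : GameData n) (hG : G.Valid) (hH : IsUnit G.H)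
    (x0 : Fin n → ℝ) (u : Fin n → ℝ → ℝ)
    (hu1 : ∀ i, ∀ t ∈ Set.Icc (0:ℝ) G.T, u i t =
      -(1 / (G.r i * G.d i)) *
        (G.Bhat i ⬝ᵥ (mexp ((G.T - t) • G.Λᵀ)).mulVec
          ((G.Lhat i).mulVec (G.H⁻¹.mulVec ((mexp (G.T • G.Λ)).mulVec x0)))))
    (hu2 : ∀ i, ∀ t, t ∉ Set.Icc (0:ℝ) G.T → u i t = 0) :
    G.xtraj x0 u G.τ = (mexp (G.τ • G.Λ)).mulVec x0 ∧
      (∀ t ∈ Set.Icc (0:ℝ) G.T,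
        G.xtraj x0 u (t + G.τ) =
          (mexp (t • G.Λ)).mulVec (G.xtraj x0 u G.τ) -
            (mexp (G.τ • G.Λ)).mulVec
              (∑ j : Fin n, (G.Phi G.T j t).mulVec
                ((1 / G.d j) •
                  (G.Lhat j).mulVec (G.H⁻¹.mulVec ((mexp (G.T • G.Λ)).mulVec x0))))) ∧
      G.xtraj x0 u G.tf =
        (mexp (G.τ • G.Λ)).mulVec (G.H⁻¹.mulVec ((mexp (G.T • G.Λ)).mulVec x0)) := by
  obtain ⟨hτ, hτtf, -⟩ := hG
  have hu : ∀ j, ∀ s < 0, u j s = 0 := fun j s hs => hu2 j s fun h => hs.not_ge h.1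
  have hx := G.xtraj_add_τ_eq_sub_Phi (x0 := x0) hτ hu hu1
  refine ⟨G.xtraj_τ hτ hu, hx, ?_⟩
  set w := G.H⁻¹ *ᵥ (mexp (G.T • G.Λ) *ᵥ x0)
  have hHw : G.H *ᵥ w = mexp (G.T • G.Λ) *ᵥ x0 := by
    rw [mulVec_mulVec, mul_nonsing_inv _ ((isUnit_iff_isUnit_det _).1 hH), one_mulVec]
  calc G.xtraj x0 u G.tf = G.xtraj x0 u (G.T + G.τ) := by rw [GameData.T, sub_add_cancel]
    _ = mexp (G.T • G.Λ) *ᵥ (mexp (G.τ • G.Λ) *ᵥ x0) -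
          mexp (G.τ • G.Λ) *ᵥ ∑ j, G.Phi G.T j G.T *ᵥ ((1 / G.d j) • G.Lhat j *ᵥ w) := by
      rw [hx G.T ⟨sub_nonneg.2 hτtf.le, le_rfl⟩, G.xtraj_τ hτ hu]
    _ = mexp (G.τ • G.Λ) *ᵥ
          (G.H *ᵥ w - ∑ j, G.Phi G.T j G.T *ᵥ ((1 / G.d j) • G.Lhat j *ᵥ w)) := by
      rw [hHw, mulVec_sub, mulVec_mulVec, mulVec_mulVec, ← mexp_add_smul, add_comm,
        mexp_add_smul]
    _ = mexp (G.τ • G.Λ) *ᵥ w := by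
      rw [G.H_mulVec]
      exact congrArg _ (add_sub_cancel_right _ _)
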